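/- Let ρ₁, ρ₂ be density matrices on n qudits with s ≥ 1. If the (s-deletions-then-t-insertions) error spheres of ρ₁ and ρ₂ are disjoint, i.e., (I^t∘D^s)(ρ₁) ∩ (I^t∘D^s)(ρ₂) = ∅, then also (I^{t+1}∘D^{s−1})(ρ₁) ∩ (I^{t+1}∘D^{s−1})(ρ₂) = ∅. -/

import Mathlib

open Matrix
open scoped ComplexOrder

/-- Matrices on `n` qudits of level `l`. -/
abbrev QMat (l n : ℕ) := Matrix (Fin n → Fin l) (Fin n → Fin l) ℂ

/-- A quantum state on some finite number of qudits. -/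
def QState (l : ℕ) := Σ n : ℕ, QMat l n

/-- Density matrix: positive semidefinite with trace 1. -/
def IsDensity {l n : ℕ} (ρ : QMat l n) : Prop := ρ.PosSemidef ∧ ρ.trace = 1

def IsDensityS {l : ℕ} (ρ : QState l) : Prop := ρ.2.PosSemidef ∧ ρ.2.trace = 1

/-- Partial trace over the qudit at position `p`. -/
noncomputable def traceOut {l n : ℕ} (p : Fin (n + 1)) (ρ : QMat l (n + 1)) : QMat l n :=
  fun x y => ∑ z : Fin l, ρ (p.insertNth z x) (p.insertNth z y)

/-- Single deletion: all states obtained by tracing out one qudit. -/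
def del1 {l : ℕ} : QState l → Set (QState l)
  | ⟨0, _⟩ => ∅
  | ⟨n + 1, ρ⟩ => { σ | ∃ p : Fin (n + 1), σ = ⟨n, traceOut p ρ⟩ }

/-- Single insertion sphere: density matrices having `ρ` among their single deletions. -/
def ins1 {l : ℕ} (ρ : QState l) : Set (QState l) :=
  { σ | IsDensityS σ ∧ ρ ∈ del1 σ }

def delSet {l : ℕ} (X : Set (QState l)) : Set (QState l) := ⋃ ρ ∈ X, del1 ρ
def insSet {l : ℕ} (X : Set (QState l)) : Set (QState l) := ⋃ ρ ∈ X, ins1 ρ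

/-- `s`-deletion errors. -/
def Dq {l : ℕ} : ℕ → Set (QState l) → Set (QState l)
  | 0, X => X
  | s + 1, X => delSet (Dq s X)

/-- `t`-insertion errors. -/
def Iq {l : ℕ} : ℕ → Set (QState l) → Set (QState l)
  | 0, X => X
  | t + 1, X => insSet (Iq t X)

/-- Quantum indel distance. -/
noncomputable def qdist {l : ℕ} (ρ₁ ρ₂ : QState l) : ℕ :=
  sInf { k | ∃ s t : ℕ, s + t = k ∧ (Dq s {ρ₁} ∩ Dq t {ρ₂}).Nonempty }

/-! A state `z` in both `(t+1)`-insertion spheres has `(t+1)`-step deletion chains down to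
some `τᵢ ∈ D^{s-1}(ρᵢ)`. Partial traces over distinct qudits commute, so the first steps
`z → xᵢ` of the two chains have a common further deletion `w`. Commuting the step `xᵢ → w`
past the remaining `t` steps of the chain `xᵢ → τᵢ` gives a `t`-step deletion of `w` onto a
deletion of `τᵢ`, which lies in `D^s(ρᵢ)`. So the density matrix `w` lies in both
`(I^t ∘ D^s)`-spheres. -/

lemma Fin.insertNth_insertNth_swap {α : Type*} {n : ℕ} (i : Fin (n + 2)) (j : Fin (n + 1))
    (c d : α) (x : Fin n → α) :
    i.insertNth (α := fun _ ↦ α) c (j.insertNth (α := fun _ ↦ α) d x) =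
      (i.succAbove j).insertNth (α := fun _ ↦ α) d
        ((j.predAbove i).insertNth (α := fun _ ↦ α) c x) := by
  funext k
  cases k using Fin.succAboveCases i with
  | x =>
    have h := congrArg ((i.succAbove j).insertNth (α := fun _ ↦ α) d
      ((j.predAbove i).insertNth (α := fun _ ↦ α) c x)) (Fin.succAbove_succAbove_predAbove i j)
    simpa using h
  | p k =>
    cases k using Fin.succAboveCases j with
    | x => simp
    | p k =>
      rw [Fin.insertNth_apply_succAbove, Fin.insertNth_apply_succAbove,
        ← Fin.succAbove_succAbove_succAbove_predAbove i j k]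
      simp

section TraceOut

variable {l n : ℕ}

lemma trace_traceOut (p : Fin (n + 1)) (ρ : QMat l (n + 1)) :
    (traceOut p ρ).trace = ρ.trace := by
  simp only [Matrix.trace, Matrix.diag, traceOut]
  rw [← (Fin.insertNthEquiv (fun _ ↦ Fin l) p).sum_comp, Fintype.sum_prod_type, Finset.sum_comm]
  rfl

lemma posSemidef_traceOut {ρ : QMat l (n + 1)} (hρ : ρ.PosSemidef) (p : Fin (n + 1)) :
    (traceOut p ρ).PosSemidef := by
  have : traceOut p ρ = ∑ z : Fin l, ρ.submatrix (p.insertNth z) (p.insertNth z) := by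
    ext x y
    simp [traceOut, Matrix.sum_apply]
  rw [this]
  exact Matrix.posSemidef_sum _ fun z _ ↦ hρ.submatrix _

lemma traceOut_traceOut_swap (i : Fin (n + 2)) (j : Fin (n + 1)) (ρ : QMat l (n + 2)) :
    traceOut j (traceOut i ρ) = traceOut (j.predAbove i) (traceOut (i.succAbove j) ρ) := by
  ext x y
  simp only [traceOut, Fin.insertNth_insertNth_swap i j]
  exact Finset.sum_comm

end TraceOut

section Deletion

variable {l : ℕ}

lemma traceOut_mem_del1 {n : ℕ} (p : Fin (n + 1)) (ρ : QMat l (n + 1)) :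
    (⟨n, traceOut p ρ⟩ : QState l) ∈ del1 ⟨n + 1, ρ⟩ :=
  ⟨p, rfl⟩

lemma exists_eq_traceOut_of_mem_del1 {σ τ : QState l} (h : σ ∈ del1 τ) :
    ∃ (n : ℕ) (ρ : QMat l (n + 1)) (p : Fin (n + 1)),
      τ = ⟨n + 1, ρ⟩ ∧ σ = ⟨n, traceOut p ρ⟩ := by
  obtain ⟨_ | n, ρ⟩ := τ
  · exact absurd h (Set.notMem_empty σ)
  · obtain ⟨p, rfl⟩ := h
    exact ⟨n, ρ, p, rfl, rfl⟩

lemma size_of_mem_del1 {σ τ : QState l} (h : σ ∈ del1 τ) : σ.1 + 1 = τ.1 := by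
  obtain ⟨n, ρ, p, rfl, rfl⟩ := exists_eq_traceOut_of_mem_del1 h
  rfl

lemma IsDensityS.of_mem_del1 {σ τ : QState l} (hτ : IsDensityS τ) (h : σ ∈ del1 τ) :
    IsDensityS σ := by
  obtain ⟨n, ρ, p, rfl, rfl⟩ := exists_eq_traceOut_of_mem_del1 h
  exact ⟨posSemidef_traceOut hτ.1 p, (trace_traceOut p ρ).trans hτ.2⟩

lemma exists_mem_del1_of_mem_del1 {z x y : QState l} (hx : x ∈ del1 z) (hy : y ∈ del1 z)
    (hz : 2 ≤ z.1) : ∃ w, w ∈ del1 x ∧ w ∈ del1 y := by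
  obtain ⟨n, ρ, a, rfl, rfl⟩ := exists_eq_traceOut_of_mem_del1 hx
  obtain ⟨b, rfl⟩ := hy
  obtain ⟨n, rfl⟩ : ∃ m, n = m + 1 := ⟨n - 1, by change 2 ≤ n + 1 at hz; omega⟩
  rcases eq_or_ne b a with rfl | hab
  · exact ⟨_, traceOut_mem_del1 0 _, traceOut_mem_del1 0 _⟩
  · obtain ⟨j, rfl⟩ := Fin.exists_succAbove_eq hab
    refine ⟨_, traceOut_mem_del1 j _, ?_⟩
    rw [traceOut_traceOut_swap]
    exact traceOut_mem_del1 _ _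

end Deletion

section Spheres

variable {l : ℕ}

lemma mem_Dq_succ {k : ℕ} {X : Set (QState l)} {σ : QState l} :
    σ ∈ Dq (k + 1) X ↔ ∃ μ ∈ Dq k X, σ ∈ del1 μ := by
  simp [Dq, delSet]

lemma mem_Iq_succ {k : ℕ} {X : Set (QState l)} {z : QState l} :
    z ∈ Iq (k + 1) X ↔ IsDensityS z ∧ ∃ σ ∈ Iq k X, σ ∈ del1 z := by
  simp [Iq, insSet, ins1]

lemma mem_Dq_succ_singleton {k : ℕ} {z τ : QState l} :
    τ ∈ Dq (k + 1) {z} ↔ ∃ x ∈ del1 z, τ ∈ Dq k {x} := by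
  induction k generalizing τ with
  | zero => simp [Dq, delSet]
  | succ k ih =>
    simp only [mem_Dq_succ, ih]
    grind

lemma size_of_mem_Dq {k : ℕ} {σ τ : QState l} (h : σ ∈ Dq k {τ}) : σ.1 + k = τ.1 := by
  induction k generalizing σ with
  | zero => rw [Set.mem_singleton_iff.1 h]; rfl
  | succ k ih =>
    obtain ⟨μ, hμ, hσ⟩ := mem_Dq_succ.1 h
    have := size_of_mem_del1 hσ
    have := ih hμ
    omega

lemma exists_mem_Dq_of_mem_Iq {k : ℕ} {X : Set (QState l)} {z : QState l}
    (h : z ∈ Iq k X) : ∃ τ ∈ X, τ ∈ Dq k {z} := by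
  induction k generalizing z with
  | zero => exact ⟨z, h, rfl⟩
  | succ k ih =>
    obtain ⟨-, σ, hσ, hσz⟩ := mem_Iq_succ.1 h
    obtain ⟨τ, hτ, hστ⟩ := ih hσ
    exact ⟨τ, hτ, mem_Dq_succ_singleton.2 ⟨σ, hσz, hστ⟩⟩

lemma mem_Iq_of_mem_Dq {k : ℕ} {X : Set (QState l)} {z τ : QState l} (hz : IsDensityS z)
    (hτ : τ ∈ X) (h : τ ∈ Dq k {z}) : z ∈ Iq k X := by
  induction k generalizing z with
  | zero => rwa [← Set.mem_singleton_iff.1 h]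
  | succ k ih =>
    obtain ⟨x, hx, hτx⟩ := mem_Dq_succ_singleton.1 h
    exact mem_Iq_succ.2 ⟨hz, x, ih (hz.of_mem_del1 hx) hτx, hx⟩

lemma exists_mem_del1_mem_Dq_of_mem_del1 {t : ℕ} {x w τ : QState l} (hw : w ∈ del1 x)
    (hτ : τ ∈ Dq t {x}) (ht : t ≤ w.1) : ∃ τ', τ' ∈ del1 τ ∧ τ' ∈ Dq t {w} := by
  induction t generalizing τ with
  | zero => exact ⟨w, Set.mem_singleton_iff.1 hτ ▸ hw, rfl⟩
  | succ t ih =>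
    obtain ⟨σ, hσ, hτσ⟩ := mem_Dq_succ.1 hτ
    obtain ⟨σ', hσ', hwσ'⟩ := ih hσ (by omega)
    have hσsize : 2 ≤ σ.1 := by
      have := size_of_mem_Dq hσ
      have := size_of_mem_del1 hw
      omega
    obtain ⟨u, hu, hσ'u⟩ := exists_mem_del1_of_mem_del1 hτσ hσ' hσsize
    exact ⟨u, hu, mem_Dq_succ.2 ⟨σ', hwσ', hσ'u⟩⟩

lemma mem_Iq_Dq_succ_of_mem_del1 {s t : ℕ} {X : Set (QState l)} {x w τ : QState l}
    (hw : IsDensityS w) (hwx : w ∈ del1 x) (hτ : τ ∈ Dq s X) (hxτ : τ ∈ Dq t {x})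
    (ht : t ≤ w.1) : w ∈ Iq t (Dq (s + 1) X) := by
  obtain ⟨τ', hτ', hwτ'⟩ := exists_mem_del1_mem_Dq_of_mem_del1 hwx hxτ ht
  exact mem_Iq_of_mem_Dq hw (mem_Dq_succ.2 ⟨τ, hτ, hτ'⟩) hwτ'

end Spheres

theorem disjoint_step_general {l n s t : ℕ} (hs : 1 ≤ s) (hsn : s ≤ n)
    (ρ₁ ρ₂ : QMat l n)
    (hdisj : Iq t (Dq s {(⟨n, ρ₁⟩ : QState l)}) ∩ Iq t (Dq s {(⟨n, ρ₂⟩ : QState l)}) = ∅) :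
    Iq (t + 1) (Dq (s - 1) {(⟨n, ρ₁⟩ : QState l)}) ∩
      Iq (t + 1) (Dq (s - 1) {(⟨n, ρ₂⟩ : QState l)}) = ∅ := by
  obtain ⟨s, rfl⟩ : ∃ s', s = s' + 1 := ⟨s - 1, by omega⟩
  rw [Nat.add_sub_cancel]
  rw [Set.eq_empty_iff_forall_notMem] at hdisj ⊢
  rintro z ⟨hz₁, hz₂⟩
  have hz : IsDensityS z := (mem_Iq_succ.1 hz₁).1
  obtain ⟨τ₁, hτ₁, hzτ₁⟩ := exists_mem_Dq_of_mem_Iq hz₁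
  obtain ⟨τ₂, hτ₂, hzτ₂⟩ := exists_mem_Dq_of_mem_Iq hz₂
  obtain ⟨x₁, hx₁, hx₁τ₁⟩ := mem_Dq_succ_singleton.1 hzτ₁
  obtain ⟨x₂, hx₂, hx₂τ₂⟩ := mem_Dq_succ_singleton.1 hzτ₂
  have hzsize : t + 2 ≤ z.1 := by
    have : τ₁.1 + s = n := size_of_mem_Dq hτ₁
    have := size_of_mem_Dq hzτ₁
    omega
  obtain ⟨w, hw₁, hw₂⟩ := exists_mem_del1_of_mem_del1 hx₁ hx₂ (by omega)
  have hwsize : t ≤ w.1 := by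
    have := size_of_mem_del1 hx₁
    have := size_of_mem_del1 hw₁
    omega
  have hw : IsDensityS w := (hz.of_mem_del1 hx₁).of_mem_del1 hw₁
  exact hdisj w ⟨mem_Iq_Dq_succ_of_mem_del1 hw hw₁ hτ₁ hx₁τ₁ hwsize,
    mem_Iq_Dq_succ_of_mem_del1 hw hw₂ hτ₂ hx₂τ₂ hwsize⟩

/-- If the `(I^t ∘ D^s)`-error spheres of `ρ₁` and `ρ₂` are disjoint (`s ≥ 1`),
then so are the `(I^{t+1} ∘ D^{s-1})`-error spheres. -/
theorem disjoint_step {l n s t : ℕ} (hs : 1 ≤ s) (hsn : s ≤ n)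
    (ρ₁ ρ₂ : QMat l n) (h₁ : IsDensity ρ₁) (h₂ : IsDensity ρ₂)
    (hdisj : Iq t (Dq s {(⟨n, ρ₁⟩ : QState l)}) ∩ Iq t (Dq s {(⟨n, ρ₂⟩ : QState l)}) = ∅) :
    Iq (t + 1) (Dq (s - 1) {(⟨n, ρ₁⟩ : QState l)}) ∩
      Iq (t + 1) (Dq (s - 1) {(⟨n, ρ₂⟩ : QState l)}) = ∅ :=
  disjoint_step_general hs hsn ρ₁ ρ₂ hdisj
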